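/- arXiv:0708.1356 — 4 statements merged into one kernel-verified Lean document; each statement's English description precedes it below -/
import Mathlib

section
/- If U is a critical point of J(U) = tr(U ρ U† θ) (i.e., [θ, UρU†] = 0) where ρ and θ are diagonal Hermitian matrices, then there exist a unitary P commuting with θ, a permutation matrix π, and a unitary Q commuting with ρ such that U = P π Q. -/
/-!
Write `θ = diagonal t` and `ρ = diagonal r`. Criticality says that `A = U ρ Uᴴ` commutes with `θ`,
i.e. `A` has no entries between different eigenvalues of `θ`. Diagonalising each of these Hermitian
blocks gives a unitary `V` commuting with `θ` with `Vᴴ A V = diagonal d`. Then `W = Vᴴ U` conjugates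
`diagonal r` into `diagonal d`, so the two have the same characteristic polynomial and `d = r ∘ σ`
for a permutation `σ`. With `π` the permutation matrix of `σ`, the unitary `πᴴ W` conjugates `ρ` to
itself, hence commutes with it, and `U = V π (πᴴ W)`.
-/

open Matrix

theorem Fintype.exists_perm_comp_eq_of_map_univ_eq {n α : Type*} [Fintype n] {d e : n → α}
    (h : Finset.univ.val.map d = Finset.univ.val.map e) : ∃ σ : Equiv.Perm n, d ∘ σ = e := by
  classical
  have hcard (c : α) : Fintype.card {i // e i = c} = Fintype.card {i // d i = c} := by
    simpa [Fintype.card_subtype, Multiset.count_map, Finset.card, eq_comm] using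
      congr_arg (Multiset.count c) h.symm
  exact ⟨Equiv.ofFiberEquiv fun c => Fintype.equivOfCardEq (hcard c),
    funext (Equiv.ofFiberEquiv_map _)⟩

theorem Unitary.commute_of_mul_mul_star_eq_self {M : Type*} [Monoid M] [StarMul M] {q a : M}
    (hq : q ∈ unitary M) (h : q * a * star q = a) : Commute q a :=
  calc q * a = q * a * (star q * q) := by rw [Unitary.star_mul_self_of_mem hq, mul_one]
    _ = a * q := by rw [← mul_assoc, h]

namespace Matrix

variable {n R : Type*}

def IsBlockDiagonalBy {o : Type*} [Zero R] (f : n → o) (M : Matrix n n R) : Prop :=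
  ∀ i j, f i ≠ f j → M i j = 0

section Fibres

variable {o : Type*} [DecidableEq o] [Zero R] (g : n → o)

theorem IsBlockDiagonalBy.submatrix_sigmaFiberEquiv {M : Matrix n n R}
    (hM : M.IsBlockDiagonalBy g) :
    M.submatrix (Equiv.sigmaFiberEquiv g) (Equiv.sigmaFiberEquiv g) =
      blockDiagonal' fun c => M.submatrix (Subtype.val : {i // g i = c} → n) Subtype.val := by
  ext ⟨c, i, hi⟩ ⟨c', j, hj⟩
  obtain rfl | hc := eq_or_ne c c'
  · rw [blockDiagonal'_apply_eq]
    rfl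
  · rw [blockDiagonal'_apply_ne _ _ _ hc]
    exact hM i j (hi ▸ hj ▸ hc)

theorem isBlockDiagonalBy_submatrix_blockDiagonal'
    (B : ∀ c, Matrix {i // g i = c} {i // g i = c} R) :
    ((blockDiagonal' B).submatrix (Equiv.sigmaFiberEquiv g).symm
      (Equiv.sigmaFiberEquiv g).symm).IsBlockDiagonalBy g :=
  fun _ _ h => blockDiagonal'_apply_ne B _ _ h

end Fibres

variable [Fintype n] [DecidableEq n]

theorem commute_diagonal_iff_isBlockDiagonalBy [CommRing R] [NoZeroDivisors R] (d : n → R)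
    (M : Matrix n n R) : Commute (diagonal d) M ↔ M.IsBlockDiagonalBy d := by
  refine ⟨fun h i j hij => ?_, fun h => ext fun i j => ?_⟩
  · have hij' := congr_fun₂ h i j
    rw [diagonal_mul, mul_diagonal] at hij'
    have : (d i - d j) * M i j = 0 := by linear_combination hij'
    exact (mul_eq_zero.1 this).resolve_left (sub_ne_zero.2 hij)
  · rw [diagonal_mul, mul_diagonal]
    by_cases hij : d i = d j
    · rw [hij, mul_comm]
    · rw [h i j hij, mul_zero, zero_mul]

theorem permMatrix_mul_diagonal [CommSemiring R] (σ : Equiv.Perm n) (d : n → R) :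
    σ.permMatrix R * diagonal d = diagonal (d ∘ σ) * σ.permMatrix R := by
  ext i j
  rw [PEquiv.toMatrix_toPEquiv_mul, PEquiv.mul_toMatrix_toPEquiv]
  by_cases h : σ i = j
  · subst h; simp
  · simp [h, Equiv.eq_symm_apply]

section Unitary

variable [CommRing R] [StarRing R]

theorem submatrix_equiv_mem_unitaryGroup {m : Type*} [Fintype m] [DecidableEq m]
    {U : Matrix m m R} (hU : U ∈ unitaryGroup m R) (e : n ≃ m) :
    U.submatrix e e ∈ unitaryGroup n R := by
  rw [mem_unitaryGroup_iff', star_eq_conjTranspose, conjTranspose_submatrix,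
    submatrix_mul_equiv, ← star_eq_conjTranspose, mem_unitaryGroup_iff'.1 hU, submatrix_one_equiv]

omit [Fintype n] [DecidableEq n] in
theorem blockDiagonal'_mem_unitaryGroup {o : Type*} [Fintype o] [DecidableEq o] {m' : o → Type*}
    [∀ c, Fintype (m' c)] [∀ c, DecidableEq (m' c)] {B : ∀ c, Matrix (m' c) (m' c) R}
    (hB : ∀ c, B c ∈ unitaryGroup (m' c) R) : blockDiagonal' B ∈ unitaryGroup (Σ c, m' c) R := by
  simp_rw [mem_unitaryGroup_iff', star_eq_conjTranspose, blockDiagonal'_conjTranspose,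
    ← blockDiagonal'_mul, ← star_eq_conjTranspose, mem_unitaryGroup_iff'.1 (hB _)]
  exact blockDiagonal'_one

theorem permMatrix_mem_unitaryGroup (σ : Equiv.Perm n) : σ.permMatrix R ∈ unitaryGroup n R := by
  rw [mem_unitaryGroup_iff', star_eq_conjTranspose, conjTranspose_permMatrix, ← permMatrix_mul,
    mul_inv_cancel, permMatrix_one]

theorem commute_star_permMatrix_mul_diagonal {W : Matrix n n R} (hW : W ∈ unitaryGroup n R)
    {r : n → R} (σ : Equiv.Perm n) (h : W * diagonal r * star W = diagonal (r ∘ σ)) :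
    Commute (star (σ.permMatrix R) * W) (diagonal r) := by
  set π := σ.permMatrix R
  have hπ : π ∈ unitaryGroup n R := permMatrix_mem_unitaryGroup σ
  refine Unitary.commute_of_mul_mul_star_eq_self (mul_mem (Unitary.star_mem hπ) hW) ?_
  calc star π * W * diagonal r * star (star π * W)
      = star π * (W * diagonal r * star W) * π := by
        simp only [star_mul, star_star, Matrix.mul_assoc]
    _ = star π * π * diagonal r := by
        rw [h, Matrix.mul_assoc, ← permMatrix_mul_diagonal, Matrix.mul_assoc]
    _ = diagonal r := by rw [Unitary.star_mul_self_of_mem hπ, Matrix.one_mul]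

end Unitary

theorem IsHermitian.exists_unitary_conj_eq_diagonal_of_isBlockDiagonalBy {𝕜 α : Type*}
    [RCLike 𝕜] {f : n → α} {A : Matrix n n 𝕜} (hA : A.IsHermitian)
    (hAf : A.IsBlockDiagonalBy f) :
    ∃ V ∈ unitaryGroup n 𝕜, V.IsBlockDiagonalBy f ∧ ∃ d, star V * A * V = diagonal d := by
  classical
  -- Blocks are indexed by `Set.range f`, which is finite, unlike `α`.
  set g := Set.rangeFactorization f
  have hg (M : Matrix n n 𝕜) : M.IsBlockDiagonalBy g ↔ M.IsBlockDiagonalBy f := by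
    simp only [IsBlockDiagonalBy, g, ne_eq, Subtype.ext_iff, Set.rangeFactorization_coe]
  set e := Equiv.sigmaFiberEquiv g
  set B := fun c => A.submatrix (Subtype.val : {i // g i = c} → n) Subtype.val
  have hB c : (B c).IsHermitian := hA.submatrix _
  set W := fun c => ((hB c).eigenvectorUnitary : Matrix {i // g i = c} {i // g i = c} 𝕜)
  have hW c : star (W c) * B c * W c = diagonal (RCLike.ofReal ∘ (hB c).eigenvalues) := by
    simpa [Unitary.conjStarAlgAut_star_apply] using (hB c).conjStarAlgAut_star_eigenvectorUnitary
  have hA_eq : A = (blockDiagonal' B).submatrix e.symm e.symm := by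
    rw [← ((hg A).2 hAf).submatrix_sigmaFiberEquiv, submatrix_submatrix, e.self_comp_symm,
      submatrix_id_id]
  refine ⟨(blockDiagonal' W).submatrix e.symm e.symm,
    submatrix_equiv_mem_unitaryGroup
      (blockDiagonal'_mem_unitaryGroup fun c => (hB c).eigenvectorUnitary.2) _,
    (hg _).1 (isBlockDiagonalBy_submatrix_blockDiagonal' g W), ?_⟩
  rw [hA_eq, star_eq_conjTranspose, conjTranspose_submatrix, submatrix_mul_equiv,
    submatrix_mul_equiv, blockDiagonal'_conjTranspose, ← blockDiagonal'_mul, ← blockDiagonal'_mul]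
  simp_rw [← star_eq_conjTranspose, hW, blockDiagonal'_diagonal, submatrix_diagonal_equiv]
  exact ⟨_, rfl⟩

open Polynomial in
theorem exists_perm_comp_eq_of_charpoly_diagonal_eq [CommRing R] [IsDomain R] {d e : n → R}
    (h : (diagonal d).charpoly = (diagonal e).charpoly) : ∃ σ : Equiv.Perm n, d ∘ σ = e := by
  apply Fintype.exists_perm_comp_eq_of_map_univ_eq
  have hroots (f : n → R) : (diagonal f).charpoly.roots = Finset.univ.val.map f := by
    rw [charpoly_diagonal, Finset.prod_eq_multiset_prod]
    simpa [Multiset.map_map, Function.comp_def] using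
      roots_multiset_prod_X_sub_C (Finset.univ.val.map f)
  rw [← hroots, ← hroots, h]

end Matrix

theorem stmt5_general (N : ℕ) (ρ θ U : Matrix (Fin N) (Fin N) ℂ)
    (hρd : ρ.IsDiag) (hθd : θ.IsDiag) (hρ : ρ.IsHermitian)
    (hU : U ∈ Matrix.unitaryGroup (Fin N) ℂ)
    (hcrit : θ * (U * ρ * Uᴴ) - (U * ρ * Uᴴ) * θ = 0) :
    ∃ P ∈ Matrix.unitaryGroup (Fin N) ℂ, ∃ Q ∈ Matrix.unitaryGroup (Fin N) ℂ,
      ∃ σ : Equiv.Perm (Fin N),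
        P * θ = θ * P ∧ Q * ρ = ρ * Q ∧ U = P * σ.permMatrix ℂ * Q := by
  obtain ⟨t, rfl⟩ : ∃ t, diagonal t = θ := ⟨_, (isDiag_iff_diagonal_diag θ).1 hθd⟩
  obtain ⟨r, rfl⟩ : ∃ r, diagonal r = ρ := ⟨_, (isDiag_iff_diagonal_diag ρ).1 hρd⟩
  obtain ⟨V, hV, hVt, d, hd⟩ :=
    (isHermitian_mul_mul_conjTranspose U hρ).exists_unitary_conj_eq_diagonal_of_isBlockDiagonalBy
      ((commute_diagonal_iff_isBlockDiagonalBy t _).1 (sub_eq_zero.1 hcrit))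
  set W := star V * U
  have hW : W ∈ unitaryGroup (Fin N) ℂ := mul_mem (Unitary.star_mem hV) hU
  have hWr : W * diagonal r * star W = diagonal d := by
    rw [← hd]
    simp only [W, star_mul, Matrix.mul_assoc, star_eq_conjTranspose, conjTranspose_conjTranspose]
  obtain ⟨σ, rfl⟩ := exists_perm_comp_eq_of_charpoly_diagonal_eq (d := r) (e := d) (by
    rw [← hWr, charpoly_mul_comm, ← Matrix.mul_assoc, Unitary.star_mul_self_of_mem hW,
      Matrix.one_mul])
  have hπ := permMatrix_mem_unitaryGroup (R := ℂ) σ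
  refine ⟨V, hV, star (σ.permMatrix ℂ) * W, mul_mem (Unitary.star_mem hπ) hW, σ,
    ((commute_diagonal_iff_isBlockDiagonalBy t V).2 hVt).symm.eq,
    (commute_star_permMatrix_mul_diagonal hW σ hWr).eq, ?_⟩
  rw [Matrix.mul_assoc, ← Matrix.mul_assoc (σ.permMatrix ℂ), Unitary.mul_star_self_of_mem hπ,
    Matrix.one_mul, ← Matrix.mul_assoc, Unitary.mul_star_self_of_mem hV, Matrix.one_mul]

/-- If `U` is a critical point of `J(U) = tr(U ρ U† θ)` (i.e. `[θ, UρU†] = 0`) with `ρ, θ`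
diagonal Hermitian, then `U = P π Q` with `P` unitary commuting with `θ`, `π` a permutation
matrix, and `Q` unitary commuting with `ρ`. -/
theorem stmt5 (N : ℕ) (ρ θ U : Matrix (Fin N) (Fin N) ℂ)
    (hρd : ρ.IsDiag) (hθd : θ.IsDiag) (hρ : ρ.IsHermitian) (hθ : θ.IsHermitian)
    (hU : U ∈ Matrix.unitaryGroup (Fin N) ℂ)
    (hcrit : θ * (U * ρ * Uᴴ) - (U * ρ * Uᴴ) * θ = 0) :
    ∃ P ∈ Matrix.unitaryGroup (Fin N) ℂ, ∃ Q ∈ Matrix.unitaryGroup (Fin N) ℂ,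
      ∃ σ : Equiv.Perm (Fin N),
        P * θ = θ * P ∧ Q * ρ = ρ * Q ∧ U = P * σ.permMatrix ℂ * Q :=
  stmt5_general N ρ θ U hρd hθd hρ hU hcrit
end

section
/- Two permutations σ and τ of {1,…,N} give rise to the same contingency table (with respect to fixed level-set partitions of sizes n_1,…,n_r and m_1,…,m_s) if and only if there exist permutations α preserving each block of the n-partition and β preserving each block of the m-partition such that τ = β σ α. -/
/-!
Record for each `p` the pair (block of `p`, block of `σ p`). The contingency table of `σ` counts
the fibers of this labelling, and two labellings of a finite set have the same fiber counts iff
they differ by a permutation `α` of the domain. Such an `α` preserves the `n`-blocks, and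
`β := τ α⁻¹ σ⁻¹` then preserves the `m`-blocks.
-/

open Finset

theorem exists_perm_comp_eq_iff_card_fiber_eq {X Y : Type*} [Fintype X] [DecidableEq Y]
    (a b : X → Y) :
    (∃ π : Equiv.Perm X, ∀ x, a (π x) = b x) ↔ ∀ y, #{x | a x = y} = #{x | b x = y} := by
  simp only [← Fintype.card_subtype]
  constructor
  · rintro ⟨π, hπ⟩ y
    exact (Fintype.card_congr (π.subtypeEquiv fun x => by rw [hπ])).symm
  · intro h
    exact ⟨.ofFiberEquiv fun y => Fintype.equivOfCardEq (h y).symm, Equiv.ofFiberEquiv_map _⟩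

theorem exists_perm_prod_comp_eq_iff_exists_mul_mul {X R S : Type*} (f : X → R) (g : X → S)
    (σ τ : Equiv.Perm X) :
    (∃ π : Equiv.Perm X, ∀ p, (f (π p), g (σ (π p))) = (f p, g (τ p))) ↔
      ∃ α β : Equiv.Perm X, (∀ p, f (α p) = f p) ∧ (∀ p, g (β p) = g p) ∧ τ = β * σ * α := by
  simp only [Prod.mk.injEq, forall_and]
  constructor
  · rintro ⟨α, hα, hσα⟩
    refine ⟨α, τ * α⁻¹ * σ⁻¹, hα, fun q => ?_, by group⟩
    simpa using (hσα (α⁻¹ (σ⁻¹ q))).symm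
  · rintro ⟨α, β, hα, hβ, rfl⟩
    exact ⟨α, hα, fun p => by simp [hβ]⟩

section ContingencyTable

variable {X R S : Type*} [Fintype X] [DecidableEq R] [DecidableEq S]

def contingencyTable (f : X → R) (g : X → S) (σ : Equiv.Perm X) (i : R) (j : S) : ℕ :=
  #{p | f p = i ∧ g (σ p) = j}

theorem contingencyTable_eq_card_fiber (f : X → R) (g : X → S) (σ : Equiv.Perm X) (i : R)
    (j : S) : contingencyTable f g σ i j = #{p | (f p, g (σ p)) = (i, j)} := by
  simp only [contingencyTable, Prod.mk.injEq]

theorem contingencyTable_eq_iff (f : X → R) (g : X → S) (σ τ : Equiv.Perm X) :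
    contingencyTable f g σ = contingencyTable f g τ ↔
      ∃ π : Equiv.Perm X, ∀ p, (f (π p), g (σ (π p))) = (f p, g (τ p)) := by
  refine Iff.trans ?_ (exists_perm_comp_eq_iff_card_fiber_eq
    (fun p => (f p, g (σ p))) (fun p => (f p, g (τ p)))).symm
  simp only [funext_iff, Prod.forall, contingencyTable_eq_card_fiber]

end ContingencyTable

/-- Two permutations `σ, τ` of `{1,…,N}` have the same contingency table with respect to
the partitions given by the fibers of the block-labelling maps `f` (the `n`-partition) and
`g` (the `m`-partition) iff `τ = β σ α` for some permutations `α` preserving every block of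
the `n`-partition and `β` preserving every block of the `m`-partition: contingency tables
classify the double cosets `(S_{m_1}×⋯×S_{m_s}) \ S_N / (S_{n_1}×⋯×S_{n_r})`. -/
theorem stmt10 (N r s : ℕ) (f : Fin N → Fin r) (g : Fin N → Fin s)
    (σ τ : Equiv.Perm (Fin N)) :
    ((fun (i : Fin r) (j : Fin s) =>
        (Finset.univ.filter (fun p : Fin N => f p = i ∧ g (σ p) = j)).card) =
      (fun (i : Fin r) (j : Fin s) =>
        (Finset.univ.filter (fun p : Fin N => f p = i ∧ g (τ p) = j)).card)) ↔
    ∃ α β : Equiv.Perm (Fin N),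
      (∀ p, f (α p) = f p) ∧ (∀ p, g (β p) = g p) ∧ τ = β * σ * α :=
  (contingencyTable_eq_iff f g σ τ).trans (exists_perm_prod_comp_eq_iff_exists_mul_mul f g σ τ)
end

section
/- Let K be an r×s nonnegative integer contingency table with row sums n_1,…,n_r > 0 and column sums m_1,…,m_s > 0 (r, s ≥ 2). Then D_+(K) = 2 Σ_{(i−p)(j−q)<0} k_{ij}k_{pq} = 0 if and only if K is 'staircase-ordered', i.e., there are no pairs (i,j), (p,q) with k_{ij} > 0, k_{pq} > 0, i < p and j > q. Moreover, among all contingency tables with the given margins, exactly one satisfies D_+(K) = 0. -/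
/-!
`D_+(K)` is a sum of nonnegative products `k_ij k_pq` over discordant pairs of cells, so it
vanishes exactly when no two positive cells are discordant. For such a staircase table the
mass of every north-west block `{i < a} × {j < b}` is forced: the two off-diagonal blocks
cannot both carry mass, so the block holds `min (N_a, M_b)`, where `N`, `M` are the cumulative
row and column margins. Block masses determine the table by inclusion–exclusion, which gives
uniqueness; the north-west corner rule produces a staircase table with the given margins.
-/

open Finset
open scoped Matrix

namespace ContingencyTable

section Staircase

variable {ι κ : Type*} [Fintype ι] [Fintype κ] [LT ι] [LT κ]
  [DecidableRel (α := ι) (· < ·)] [DecidableRel (α := κ) (· < ·)]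

def dPlus (K : Matrix ι κ ℕ) : ℕ :=
  2 * ∑ i, ∑ p, ∑ j, ∑ q, (if i < p ∧ q < j then K i j * K p q else 0)

def IsStaircase (K : Matrix ι κ ℕ) : Prop :=
  ¬ ∃ i p j q, 0 < K i j ∧ 0 < K p q ∧ i < p ∧ q < j

theorem dPlus_eq_zero_iff (K : Matrix ι κ ℕ) : dPlus K = 0 ↔ IsStaircase K := by
  simp only [dPlus, IsStaircase, mul_eq_zero, OfNat.ofNat_ne_zero, false_or,
    sum_eq_zero_iff, mem_univ, true_implies, ite_eq_right_iff, not_exists, not_and,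
    Nat.pos_iff_ne_zero]
  exact forall₄_congr fun i p j q => by tauto

end Staircase

theorem exists_pos_of_sum_ite_ne_zero {ι κ : Type*} [Fintype ι] [Fintype κ] {K : Matrix ι κ ℕ}
    {P : ι → κ → Prop} [∀ i j, Decidable (P i j)]
    (h : ∑ i, ∑ j, (if P i j then K i j else 0) ≠ 0) : ∃ i j, P i j ∧ 0 < K i j := by
  obtain ⟨i, -, hi⟩ := exists_ne_zero_of_sum_ne_zero h
  obtain ⟨j, -, hj⟩ := exists_ne_zero_of_sum_ne_zero hi
  by_cases hP : P i j
  · exact ⟨i, j, hP, Nat.pos_of_ne_zero (by simpa [hP] using hj)⟩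
  · simp [hP] at hj

def cumSum {r : ℕ} (f : Fin r → ℕ) (a : ℕ) : ℕ := ∑ i : Fin r, if i.val < a then f i else 0

section CumSum

variable {r : ℕ} (f : Fin r → ℕ)

theorem cumSum_zero : cumSum f 0 = 0 := by simp [cumSum]

theorem cumSum_succ (i : Fin r) : cumSum f (i.val + 1) = cumSum f i.val + f i := by
  rw [cumSum, cumSum, ← Fintype.sum_ite_eq' i f, ← sum_add_distrib]
  refine sum_congr rfl fun k _ => ?_
  have : k = i ↔ k.val = i.val := Fin.ext_iff
  split_ifs <;> omega

theorem cumSum_mono : Monotone (cumSum f) := fun _ _ hab =>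
  sum_le_sum fun _ _ => by split_ifs <;> omega

theorem cumSum_of_le {a : ℕ} (h : r ≤ a) : cumSum f a = ∑ i, f i :=
  sum_congr rfl fun i _ => if_pos (i.isLt.trans_le h)

end CumSum

section BlockSum

variable {r s : ℕ}

def blockSum (K : Matrix (Fin r) (Fin s) ℕ) (a b : ℕ) : ℕ :=
  ∑ i, ∑ j, if i.val < a ∧ j.val < b then K i j else 0

theorem blockSum_add_northEast {K : Matrix (Fin r) (Fin s) ℕ} {n : Fin r → ℕ}
    (hK : ∀ i, ∑ j, K i j = n i) (a b : ℕ) :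
    blockSum K a b + ∑ i, ∑ j, (if i.val < a ∧ ¬ j.val < b then K i j else 0) = cumSum n a := by
  rw [blockSum, cumSum, ← sum_add_distrib]
  refine sum_congr rfl fun i _ => ?_
  rw [← sum_add_distrib]
  split_ifs with h
  · rw [← hK i]
    exact sum_congr rfl fun j _ => by by_cases hj : j.val < b <;> simp [h, hj]
  · exact sum_eq_zero fun j _ => by simp [h]

theorem blockSum_transpose (K : Matrix (Fin r) (Fin s) ℕ) (a b : ℕ) :
    blockSum Kᵀ b a = blockSum K a b := by
  rw [blockSum, blockSum, sum_comm]
  simp only [Matrix.transpose_apply, and_comm]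

theorem blockSum_add_southWest {K : Matrix (Fin r) (Fin s) ℕ} {m : Fin s → ℕ}
    (hK : ∀ j, ∑ i, K i j = m j) (a b : ℕ) :
    blockSum K a b + ∑ i, ∑ j, (if ¬ i.val < a ∧ j.val < b then K i j else 0) = cumSum m b := by
  rw [← blockSum_add_northEast (K := Kᵀ) hK b a, blockSum_transpose, sum_comm]
  simp only [Matrix.transpose_apply, and_comm]

theorem IsStaircase.blockSum_eq_min {K : Matrix (Fin r) (Fin s) ℕ}
    {n : Fin r → ℕ} {m : Fin s → ℕ} (hst : IsStaircase K)
    (hn : ∀ i, ∑ j, K i j = n i) (hm : ∀ j, ∑ i, K i j = m j) (a b : ℕ) :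
    blockSum K a b = min (cumSum n a) (cumSum m b) := by
  have hNE := blockSum_add_northEast hn a b
  have hSW := blockSum_add_southWest hm a b
  by_contra hne
  obtain ⟨i, j, ⟨hia, hjb⟩, hij⟩ :=
    exists_pos_of_sum_ite_ne_zero (K := K) (P := fun i j => i.val < a ∧ ¬ j.val < b) (by omega)
  obtain ⟨p, q, ⟨hpa, hqb⟩, hpq⟩ :=
    exists_pos_of_sum_ite_ne_zero (K := K) (P := fun i j => ¬ i.val < a ∧ j.val < b) (by omega)
  exact hst ⟨i, p, j, q, hij, hpq, by rw [Fin.lt_def]; omega, by rw [Fin.lt_def]; omega⟩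

theorem blockSum_inclusion_exclusion (K : Matrix (Fin r) (Fin s) ℕ) (i : Fin r) (j : Fin s) :
    blockSum K (i.val + 1) (j.val + 1) + blockSum K i j =
      blockSum K (i.val + 1) j + blockSum K i (j.val + 1) + K i j := by
  have hcell : K i j = ∑ k, ∑ l, if k = i ∧ l = j then K k l else 0 := by
    simp [ite_and]
  rw [hcell]
  simp only [blockSum, ← sum_add_distrib]
  refine sum_congr rfl fun k _ => sum_congr rfl fun l _ => ?_
  have hk : k = i ↔ k.val = i.val := Fin.ext_iff
  have hl : l = j ↔ l.val = j.val := Fin.ext_iff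
  split_ifs <;> omega

theorem IsStaircase.eq_of_margins {K L : Matrix (Fin r) (Fin s) ℕ}
    {n : Fin r → ℕ} {m : Fin s → ℕ}
    (hK : IsStaircase K) (hKn : ∀ i, ∑ j, K i j = n i) (hKm : ∀ j, ∑ i, K i j = m j)
    (hL : IsStaircase L) (hLn : ∀ i, ∑ j, L i j = n i) (hLm : ∀ j, ∑ i, L i j = m j) :
    K = L := by
  have hblock a b : blockSum K a b = blockSum L a b := by
    rw [hK.blockSum_eq_min hKn hKm, hL.blockSum_eq_min hLn hLm]
  ext i j
  have hKij := blockSum_inclusion_exclusion K i j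
  have hLij := blockSum_inclusion_exclusion L i j
  rw [hblock, hblock, hblock, hblock] at hKij
  omega

end BlockSum

section NorthWestCorner

variable {r s : ℕ}

/-- The table of the north-west corner rule: the entry `(i, j)` is the length of the overlap of
`[N_i, N_{i+1})` and `[M_j, M_{j+1})`, for the cumulative margins `N`, `M` (truncated
subtraction gives `0` when the intervals are disjoint). -/
def northWestCorner (n : Fin r → ℕ) (m : Fin s → ℕ) : Matrix (Fin r) (Fin s) ℕ :=
  fun i j => min (cumSum n (i.val + 1)) (cumSum m (j.val + 1)) - max (cumSum n i) (cumSum m j)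

theorem northWestCorner_transpose (n : Fin r → ℕ) (m : Fin s → ℕ) :
    (northWestCorner n m)ᵀ = northWestCorner m n := by
  ext j i
  simp only [Matrix.transpose_apply, northWestCorner, min_comm, max_comm]

theorem northWestCorner_row_sum {n : Fin r → ℕ} {m : Fin s → ℕ}
    (hN : ∑ i, n i = ∑ j, m j) (i : Fin r) : ∑ j, northWestCorner n m i j = n i := by
  set lo := cumSum n i
  set hi := cumSum n (i.val + 1)
  have hlo_hi : hi = lo + n i := cumSum_succ n i
  have hhi_le : hi ≤ cumSum m s := by
    rw [cumSum_of_le m le_rfl, ← hN, ← cumSum_of_le n le_rfl]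
    exact cumSum_mono n i.isLt
  -- the row telescopes along `M` clamped to `[N_i, N_{i+1}]`
  set clamp : ℕ → ℕ := fun t => max lo (min hi (cumSum m t))
  have hclamp : Monotone clamp := fun x y hxy => by
    have := cumSum_mono m hxy
    simp only [clamp]
    omega
  have hentry (j : Fin s) : northWestCorner n m i j = clamp (j.val + 1) - clamp j := by
    have := cumSum_mono m (Nat.le_succ j.val)
    simp only [northWestCorner, clamp]
    omega
  rw [sum_congr rfl fun j _ => hentry j, Fin.sum_univ_eq_sum_range (fun t => clamp (t + 1) - clamp t),
    sum_range_tsub hclamp]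
  simp only [clamp, cumSum_zero]
  omega

theorem northWestCorner_col_sum {n : Fin r → ℕ} {m : Fin s → ℕ}
    (hN : ∑ i, n i = ∑ j, m j) (j : Fin s) : ∑ i, northWestCorner n m i j = m j := by
  rw [← northWestCorner_transpose m n]
  exact northWestCorner_row_sum hN.symm j

theorem isStaircase_northWestCorner (n : Fin r → ℕ) (m : Fin s → ℕ) :
    IsStaircase (northWestCorner n m) := by
  rintro ⟨i, p, j, q, hij, hpq, hip, hqj⟩
  simp only [northWestCorner] at hij hpq
  have := cumSum_mono n (show i.val + 1 ≤ p.val from hip)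
  have := cumSum_mono m (show q.val + 1 ≤ j.val from hqj)
  omega

end NorthWestCorner

end ContingencyTable

open ContingencyTable in
theorem stmt17_general (r s : ℕ)
    (n : Fin r → ℕ) (m : Fin s → ℕ)
    (hN : ∑ i, n i = ∑ j, m j) :
    (∀ K : Matrix (Fin r) (Fin s) ℕ,
      (∀ i, ∑ j, K i j = n i) → (∀ j, ∑ i, K i j = m j) →
      ((2 * ∑ i, ∑ p, ∑ j, ∑ q, (if i < p ∧ q < j then K i j * K p q else 0) = 0) ↔
        ¬ ∃ i p j q, 0 < K i j ∧ 0 < K p q ∧ i < p ∧ q < j)) ∧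
    (∃! K : Matrix (Fin r) (Fin s) ℕ,
      (∀ i, ∑ j, K i j = n i) ∧ (∀ j, ∑ i, K i j = m j) ∧
      2 * ∑ i, ∑ p, ∑ j, ∑ q, (if i < p ∧ q < j then K i j * K p q else 0) = 0) := by
  have hrow := northWestCorner_row_sum hN
  have hcol := northWestCorner_col_sum hN
  refine ⟨fun K _ _ => dPlus_eq_zero_iff K, northWestCorner n m,
    ⟨hrow, hcol, (dPlus_eq_zero_iff _).2 (isStaircase_northWestCorner n m)⟩, ?_⟩
  rintro L ⟨hLn, hLm, hL⟩
  exact ((dPlus_eq_zero_iff L).1 hL).eq_of_margins hLn hLm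
    (isStaircase_northWestCorner n m) hrow hcol

/-- For contingency tables with positive margins (`r, s ≥ 2`): `D_+(K) = 0` iff `K` is
staircase-ordered (no pairs `(i,j), (p,q)` with `k_{ij} > 0`, `k_{pq} > 0`, `i < p`,
`j > q`); moreover, among all contingency tables with the given margins exactly one
satisfies `D_+(K) = 0`. -/
theorem stmt17 (r s : ℕ) (hr : 2 ≤ r) (hs : 2 ≤ s)
    (n : Fin r → ℕ) (m : Fin s → ℕ)
    (hn : ∀ i, 0 < n i) (hm : ∀ j, 0 < m j) (hN : ∑ i, n i = ∑ j, m j) :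
    (∀ K : Matrix (Fin r) (Fin s) ℕ,
      (∀ i, ∑ j, K i j = n i) → (∀ j, ∑ i, K i j = m j) →
      ((2 * ∑ i, ∑ p, ∑ j, ∑ q, (if i < p ∧ q < j then K i j * K p q else 0) = 0) ↔
        ¬ ∃ i p j q, 0 < K i j ∧ 0 < K p q ∧ i < p ∧ q < j)) ∧
    (∃! K : Matrix (Fin r) (Fin s) ℕ,
      (∀ i, ∑ j, K i j = n i) ∧ (∀ j, ∑ i, K i j = m j) ∧
      2 * ∑ i, ∑ p, ∑ j, ∑ q, (if i < p ∧ q < j then K i j * K p q else 0) = 0) :=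
  stmt17_general r s n m hN
end

section
/- Consider the Hessian quadratic form H(A) = tr(A ρ' A θ − A² ρ' θ) at a critical point, where ρ' and θ are diagonal real matrices with diagonal entries λ_β and ε_β that commute. Writing A Hermitian with entries A_{βγ} = x_{βγ} + i y_{βγ} (β < γ), one has H(A) = − Σ_{β<γ} (λ_β − λ_γ)(ε_β − ε_γ)(x_{βγ}² + y_{βγ}²). -/
/-!
Expanding the trace gives `Σ_{i,j} (λ_j - λ_i) ε_i A_ij A_ji`. The diagonal terms vanish, and
pairing `(i, j)` with `(j, i)` turns the sum into `-Σ_{i<j} (λ_i - λ_j)(ε_i - ε_j) A_ij A_ji`;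
this holds for any square matrix over a commutative ring. For Hermitian `A`,
`A_ij A_ji = |A_ij|²`.
-/

open Matrix Finset

section

variable {ι R : Type*} [Fintype ι]

theorem Finset.sum_sum_eq_sum_sum_lt_add_swap [LinearOrder ι] {M : Type*} [AddCommMonoid M]
    (f : ι → ι → M) (hf : ∀ i, f i i = 0) :
    ∑ i, ∑ j, f i j = ∑ i, ∑ j, if i < j then f i j + f j i else 0 := by
  have hsplit : ∀ i j, f i j = (if i < j then f i j else 0) + if j < i then f i j else 0 := by
    intro i j
    rcases lt_trichotomy i j with h | rfl | h
    · simp [h, h.not_gt]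
    · simp [hf]
    · simp [h, h.not_gt]
  calc ∑ i, ∑ j, f i j
      = ∑ i, ∑ j, (if i < j then f i j else 0) + ∑ i, ∑ j, if j < i then f i j else 0 := by
        simp only [← sum_add_distrib, ← hsplit]
    _ = ∑ i, ∑ j, (if i < j then f i j else 0) + ∑ i, ∑ j, if i < j then f j i else 0 := by
        rw [sum_comm (f := fun i j => if j < i then f i j else 0)]
    _ = ∑ i, ∑ j, if i < j then f i j + f j i else 0 := by
        simp only [← sum_add_distrib, ite_add_ite, add_zero]

theorem Finset.sum_sum_sub_mul_mul_eq_neg_sum_sum_lt [LinearOrder ι] [CommRing R]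
    (d e : ι → R) (w : ι → ι → R) (hw : ∀ i j, w j i = w i j) :
    ∑ i, ∑ j, (d j - d i) * e i * w i j =
      -∑ i, ∑ j, if i < j then (d i - d j) * (e i - e j) * w i j else 0 := by
  rw [sum_sum_eq_sum_sum_lt_add_swap _ fun i => by rw [sub_self, zero_mul, zero_mul]]
  simp only [← sum_neg_distrib]
  refine sum_congr rfl fun i _ => sum_congr rfl fun j _ => ?_
  split_ifs
  · rw [hw]; ring
  · rw [neg_zero]

variable [DecidableEq ι]

theorem Matrix.trace_mul_diagonal_mul_mul_diagonal [CommSemiring R] (A B : Matrix ι ι R)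
    (d e : ι → R) :
    trace (A * diagonal d * B * diagonal e) = ∑ i, ∑ j, A i j * d j * B j i * e i := by
  simp only [trace, diag_apply, mul_diagonal]
  simp only [mul_apply (M := A * diagonal d), mul_diagonal, sum_mul]

theorem Matrix.trace_mul_mul_diagonal_mul_diagonal [CommSemiring R] (A B : Matrix ι ι R)
    (d e : ι → R) :
    trace (A * B * diagonal d * diagonal e) = ∑ i, ∑ j, A i j * B j i * d i * e i := by
  simp only [trace, diag_apply, mul_diagonal]
  simp only [mul_apply, sum_mul]

theorem Matrix.trace_hessian_diagonal [LinearOrder ι] [CommRing R] (A : Matrix ι ι R)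
    (d e : ι → R) :
    trace (A * diagonal d * A * diagonal e - A * A * diagonal d * diagonal e) =
      -∑ i, ∑ j, if i < j then (d i - d j) * (e i - e j) * (A i j * A j i) else 0 := by
  refine Eq.trans ?_ <|
    sum_sum_sub_mul_mul_eq_neg_sum_sum_lt d e (fun i j => A i j * A j i) fun _ _ => mul_comm _ _
  rw [trace_sub, trace_mul_diagonal_mul_mul_diagonal, trace_mul_mul_diagonal_mul_diagonal,
    ← sum_sub_distrib]
  refine sum_congr rfl fun i _ => ?_
  rw [← sum_sub_distrib]
  exact sum_congr rfl fun j _ => by ring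

end

/-- The Hessian quadratic form `H(A) = tr(A ρ' A θ − A² ρ' θ)` at a critical point, for
real diagonal `ρ' = diag(λ)` and `θ = diag(ε)` and Hermitian `A` with entries
`A_{βγ} = x_{βγ} + i y_{βγ}`, equals
`− Σ_{β<γ} (λ_β − λ_γ)(ε_β − ε_γ)(x_{βγ}² + y_{βγ}²)`. -/
theorem stmt18 (N : ℕ) (lam eps : Fin N → ℝ) (A : Matrix (Fin N) (Fin N) ℂ)
    (hA : A.IsHermitian) :
    Matrix.trace
      (A * Matrix.diagonal (fun i => (lam i : ℂ)) * A *
          Matrix.diagonal (fun i => (eps i : ℂ)) -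
        A * A * Matrix.diagonal (fun i => (lam i : ℂ)) *
          Matrix.diagonal (fun i => (eps i : ℂ))) =
    ((-(∑ β, ∑ γ, if β < γ then
        (lam β - lam γ) * (eps β - eps γ) * Complex.normSq (A β γ) else 0) : ℝ) : ℂ) := by
  have hnormSq : ∀ i j, A i j * A j i = Complex.normSq (A i j) := fun i j => by
    rw [← hA.apply j i]
    exact Complex.mul_conj _
  simp only [trace_hessian_diagonal, hnormSq]
  push_cast [apply_ite Complex.ofReal]
  -- the sides differ only in the order instance on `Fin N` behind `β < γ`
  rfl
end
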